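/- arXiv:2505.20054 — 4 statements merged into one kernel-verified Lean document; each statement's English description precedes it below -/
import Mathlib

section
/- Fix r ≥ 2^{5/(qs)} with q, s > 0, qs ≤ 1. Set ℓ(t) = (r-t)^{-qs} for t ∈ (0,r) and γ_r = ( ℓ(r-1) - ℓ(r/2) - ℓ'(r/2)(r/2 - 1) )^{-1}. Then γ_r is well-defined and 1 < γ_r < 2. -/
theorem stmt_11 (q s r : ℝ) (hq : 0 < q) (hs : 0 < s) (hqs : q * s ≤ 1)
    (hr : (2:ℝ) ^ (5 / (q * s)) ≤ r) :
    -- `D = ℓ(r-1) - ℓ(r/2) - ℓ'(r/2)(r/2 - 1)` with `ℓ(t) = (r-t)^{-qs}`,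
    -- `ℓ'(t) = qs (r-t)^{-(qs+1)}`; then `γ_r = D⁻¹` is well defined and `1 < γ_r < 2`.
    let D : ℝ := (r - (r - 1)) ^ (-(q * s)) - (r - r / 2) ^ (-(q * s))
      - q * s * (r - r / 2) ^ (-(q * s + 1)) * (r / 2 - 1)
    0 < D ∧ 1 < D⁻¹ ∧ D⁻¹ < 2 := by
  intro D
  set a := q * s with ha_def
  have ha : 0 < a := mul_pos hq hs
  have h5a : (5:ℝ) ≤ 5 / a := by
    rw [le_div_iff₀ ha]; nlinarith
  have hr32 : (32:ℝ) ≤ r := by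
    have h1 : (2:ℝ) ^ (5:ℝ) ≤ (2:ℝ) ^ (5 / a) :=
      Real.rpow_le_rpow_of_exponent_le one_le_two h5a
    have h2 : (2:ℝ) ^ (5:ℝ) = 32 := by
      rw [show (5:ℝ) = ((5:ℕ):ℝ) by norm_num, Real.rpow_natCast]; norm_num
    linarith
  have hx0 : (0:ℝ) < r / 2 := by linarith
  have h1 : (2:ℝ) ^ (5 / a - 1) ≤ r / 2 := by
    rw [Real.rpow_sub two_pos, Real.rpow_one]
    linarith
  have hx16 : (16:ℝ) ≤ (r / 2) ^ a := by
    have e4 : (2:ℝ) ^ (4:ℝ) = 16 := by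
      rw [show (4:ℝ) = ((4:ℕ):ℝ) by norm_num, Real.rpow_natCast]; norm_num
    have step1 : (2:ℝ) ^ (4:ℝ) ≤ (2:ℝ) ^ ((5 / a - 1) * a) := by
      apply Real.rpow_le_rpow_of_exponent_le one_le_two
      have h : (5 / a - 1) * a = 5 - a := by field_simp
      rw [h]; linarith
    have step2 : (2:ℝ) ^ ((5 / a - 1) * a) = ((2:ℝ) ^ (5 / a - 1)) ^ a :=
      Real.rpow_mul (by norm_num) _ _
    have step3 : ((2:ℝ) ^ (5 / a - 1)) ^ a ≤ (r / 2) ^ a :=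
      Real.rpow_le_rpow (Real.rpow_nonneg (by norm_num) _) h1 ha.le
    linarith [e4 ▸ step1, step2 ▸ step3]
  have hxa_pos : (0:ℝ) < (r / 2) ^ a := Real.rpow_pos_of_pos hx0 a
  have hxna : (r / 2) ^ (-a) ≤ 1 / 16 := by
    rw [Real.rpow_neg hx0.le]
    rw [inv_le_comm₀ (by positivity) (by norm_num)]
    calc ((1:ℝ) / 16)⁻¹ = 16 := by norm_num
    _ ≤ (r / 2) ^ a := hx16
  have hxna_pos : (0:ℝ) < (r / 2) ^ (-a) := Real.rpow_pos_of_pos hx0 _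
  have hsplit : (r / 2) ^ (-(a + 1)) * (r / 2) = (r / 2) ^ (-a) := by
    have h := (Real.rpow_add hx0 (-(a + 1)) 1).symm
    rw [Real.rpow_one] at h
    rw [h]; congr 1; ring
  have hterm2_pos : 0 < a * (r / 2) ^ (-(a + 1)) * (r / 2 - 1) := by
    have := Real.rpow_pos_of_pos hx0 (-(a + 1))
    have : (0:ℝ) < r / 2 - 1 := by linarith
    positivity
  have hterm2 : a * (r / 2) ^ (-(a + 1)) * (r / 2 - 1) ≤ 1 / 16 := by
    have hp : (0:ℝ) < (r / 2) ^ (-(a + 1)) := Real.rpow_pos_of_pos hx0 _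
    have h2 : (r / 2) ^ (-(a + 1)) * (r / 2 - 1) ≤ (r / 2) ^ (-a) := by
      calc (r / 2) ^ (-(a + 1)) * (r / 2 - 1) ≤ (r / 2) ^ (-(a + 1)) * (r / 2) := by
            apply mul_le_mul_of_nonneg_left (by linarith) hp.le
        _ = (r / 2) ^ (-a) := hsplit
    calc a * (r / 2) ^ (-(a + 1)) * (r / 2 - 1)
        = a * ((r / 2) ^ (-(a + 1)) * (r / 2 - 1)) := by ring
      _ ≤ 1 * ((r / 2) ^ (-a)) := by
          apply mul_le_mul hqs h2 (by nlinarith [hp.le, hr32]) zero_le_one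
      _ ≤ 1 / 16 := by linarith
  have hone : (r - (r - 1)) ^ (-a) = 1 := by
    rw [show r - (r - 1) = 1 by ring, Real.one_rpow]
  have hhalf : r - r / 2 = r / 2 := by ring
  have hD_eq : D = 1 - (r / 2) ^ (-a) - a * (r / 2) ^ (-(a + 1)) * (r / 2 - 1) := by
    simp only [D, hhalf, hone, ha_def, sub_sub_cancel, Real.one_rpow]
  have hDlow : 1 / 2 < D := by rw [hD_eq]; linarith
  have hDhigh : D < 1 := by rw [hD_eq]; linarith
  have hD0 : 0 < D := lt_trans one_half_pos hDlow
  refine ⟨hD0, ?_, ?_⟩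
  · exact ((one_lt_inv₀ hD0).2 hDhigh)
  · have h := inv_strictAnti₀ (by norm_num : (0:ℝ) < 1 / 2) hDlow
    simpa using h
end

section
/- Let Ω ⊆ ℝⁿ be a domain, K : ℝⁿ → [0,∞] even and bounded below by λ𝟙_{B_{r₀}}(x)|x|^{-(n+2s)} and above by Λ|x|^{-(n+2s)}, f₁, f₂ : ℝⁿ × ℝ → ℝ continuous, and v, w ∈ L^∞(ℝⁿ) ∩ C^{2s+θ}(Ω) (θ > 0, 2s+θ not an integer) with L_K v ≤ f₁(·, v) in Ω, L_K w ≥ f₂(·, w) in Ω, v ≥ w on all of ℝⁿ, and f₁(x, w(x)) ≤ f₂(x, w(x)) for all x ∈ Ω. If there exists x₀ ∈ Ω with v(x₀) = w(x₀), then v ≡ w in Ω. -/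
open MeasureTheory Metric

/-- The nonlocal operator `L_K u(x) = PV ∫_{ℝⁿ} (u(y) - u(x)) K(x-y) dy`, written (using the
even symmetry of `K`) in the non-singular second-increment form
`L_K u(x) = (1/2) ∫_{ℝⁿ} (u(x+z) + u(x-z) - 2u(x)) K(z) dz`. -/
noncomputable def LKn (n : ℕ) (K u : (Fin n → ℝ) → ℝ) (x : Fin n → ℝ) : ℝ :=
  (1 / 2) * ∫ z, (u (x + z) + u (x - z) - 2 * u x) * K z

theorem stmt_14 (n : ℕ) (s lam Λ r₀ θ : ℝ)
    (hs : s ∈ Set.Ioo (0:ℝ) 1) (hlam : 0 < lam) (hlamΛ : lam ≤ Λ) (hr₀ : 0 < r₀) (hθ : 0 < θ)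
    (Ω : Set (Fin n → ℝ)) (hΩopen : IsOpen Ω) (hΩconn : IsConnected Ω)
    (K : (Fin n → ℝ) → ℝ) (hK0 : ∀ x, 0 ≤ K x) (hKeven : ∀ x, K (-x) = K x)
    (hKbound : ∀ᵐ x ∂(volume : Measure (Fin n → ℝ)),
      (ball (0 : Fin n → ℝ) r₀).indicator (fun x => lam * ‖x‖ ^ (-((n : ℝ) + 2 * s))) x ≤ K x ∧
      K x ≤ Λ * ‖x‖ ^ (-((n : ℝ) + 2 * s)))
    (f₁ f₂ : (Fin n → ℝ) → ℝ → ℝ)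
    (hf₁ : Continuous (fun p : (Fin n → ℝ) × ℝ => f₁ p.1 p.2))
    (hf₂ : Continuous (fun p : (Fin n → ℝ) × ℝ => f₂ p.1 p.2))
    (v w : (Fin n → ℝ) → ℝ) (M : ℝ)
    (hvb : ∀ x, |v x| ≤ M) (hwb : ∀ x, |w x| ≤ M)
    (hvc : ContinuousOn v Ω) (hwc : ContinuousOn w Ω)
    -- `v, w ∈ C^{2s+θ}(Ω)`: locally the second-order increments are controlled by `‖z‖^{2s+θ}`,
    -- so that `L_K v`, `L_K w` are well defined pointwise in `Ω`
    (hvreg : ∀ x ∈ Ω, ∃ c > 0, ∃ δ > 0, ∀ z : Fin n → ℝ, ‖z‖ < δ →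
      |v (x + z) + v (x - z) - 2 * v x| ≤ c * ‖z‖ ^ (2 * s + θ))
    (hwreg : ∀ x ∈ Ω, ∃ c > 0, ∃ δ > 0, ∀ z : Fin n → ℝ, ‖z‖ < δ →
      |w (x + z) + w (x - z) - 2 * w x| ≤ c * ‖z‖ ^ (2 * s + θ))
    (hvint : ∀ x ∈ Ω, Integrable (fun z => (v (x + z) + v (x - z) - 2 * v x) * K z))
    (hwint : ∀ x ∈ Ω, Integrable (fun z => (w (x + z) + w (x - z) - 2 * w x) * K z))
    (hvsub : ∀ x ∈ Ω, LKn n K v x ≤ f₁ x (v x))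
    (hwsup : ∀ x ∈ Ω, f₂ x (w x) ≤ LKn n K w x)
    (hvw : ∀ x, w x ≤ v x)
    (hf : ∀ x ∈ Ω, f₁ x (w x) ≤ f₂ x (w x))
    (x₀ : Fin n → ℝ) (hx₀ : x₀ ∈ Ω) (htouch : v x₀ = w x₀) :
    ∀ x ∈ Ω, v x = w x := by
  -- Handle the degenerate case `n = 0` (the space is a single point).
  obtain _ | n := n
  · intro x hx
    have : x = x₀ := Subsingleton.elim x x₀
    rw [this]; exact htouch
  -- `u = v - w ≥ 0`, continuous on `Ω`.
  set u : (Fin (n+1) → ℝ) → ℝ := fun p => v p - w p with hu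
  clear_value u
  have hu0 : ∀ p, 0 ≤ u p := fun p => by rw [hu]; exact sub_nonneg.2 (hvw p)
  -- Key step: if `u x = 0` for `x ∈ Ω`, then `u = 0` on `Ω ∩ ball x r₀`.
  have key : ∀ x ∈ Ω, v x = w x → ∀ y ∈ Ω, y ∈ ball x r₀ → v y = w y := by
    intro x hx hvx y hy hyball
    have hux : u x = 0 := by rw [hu]; simp [hvx]
    -- the nonnegative integrand
    set g : (Fin (n+1) → ℝ) → ℝ := fun z => (u (x + z) + u (x - z)) * K z with hg
    have hgeq : ∀ z, g z = (v (x + z) + v (x - z) - 2 * v x) * K z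
        - (w (x + z) + w (x - z) - 2 * w x) * K z := by
      intro z; simp only [hg, hu]; rw [hvx]; ring
    have hgint : Integrable g := by
      have := (hvint x hx).sub (hwint x hx)
      exact this.congr (Filter.Eventually.of_forall fun z => (hgeq z).symm)
    have hgnn : ∀ z, 0 ≤ g z :=
      fun z => mul_nonneg (add_nonneg (hu0 _) (hu0 _)) (hK0 z)
    -- the integral of `g` is `2 (L_K v x - L_K w x) ≤ 0`
    have hIeq : ∫ z, g z = 2 * (LKn (n+1) K v x - LKn (n+1) K w x) := by
      have h' : ∫ z, g z = (∫ z, (v (x + z) + v (x - z) - 2 * v x) * K z)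
          - ∫ z, (w (x + z) + w (x - z) - 2 * w x) * K z := by
        rw [← integral_sub (hvint x hx) (hwint x hx)]
        congr 1; funext z; exact hgeq z
      unfold LKn; rw [h']; ring
    have hIle : ∫ z, g z ≤ 0 := by
      rw [hIeq]
      have h1 : LKn (n+1) K v x ≤ f₁ x (v x) := hvsub x hx
      have h2 : f₂ x (w x) ≤ LKn (n+1) K w x := hwsup x hx
      have h3 : f₁ x (w x) ≤ f₂ x (w x) := hf x hx
      rw [hvx] at h1
      linarith
    have hIzero : ∫ z, g z = 0 :=
      le_antisymm hIle (integral_nonneg hgnn)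
    have haeg : g =ᵐ[volume] 0 :=
      (integral_eq_zero_iff_of_nonneg hgnn hgint).mp hIzero
    -- hence `u (x + z) = 0` for a.e. `z` in the ball of radius `r₀`
    have haez : ∀ᵐ z : Fin (n+1) → ℝ, z ∈ ball (0 : Fin (n+1) → ℝ) r₀ → z ≠ 0 →
        u (x + z) = 0 := by
      filter_upwards [haeg, hKbound] with z h1 h2
      intro hzb hz0
      have hzpos : 0 < ‖z‖ := norm_pos_iff.mpr hz0
      have hKlow := h2.1
      rw [Set.indicator_of_mem hzb] at hKlow
      have hKpos : 0 < K z :=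
        lt_of_lt_of_le (mul_pos hlam (Real.rpow_pos_of_pos hzpos _)) hKlow
      have hsum : u (x + z) + u (x - z) = 0 := by
        have h0 : (u (x + z) + u (x - z)) * K z = 0 := h1
        rcases mul_eq_zero.mp h0 with h | h
        · exact h
        · exact absurd h (ne_of_gt hKpos)
      have := hu0 (x + z); have := hu0 (x - z); linarith
    -- conclude by continuity: suppose `u y > 0`
    by_contra hne
    have huy : 0 < u y := by
      rcases lt_or_eq_of_le (hu0 y) with h | h
      · exact h
      · exfalso
        apply hne
        have h' := h.symm
        rw [hu] at h'
        simp only at h'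
        linarith
    set z₀ := y - x with hz₀
    have hxz₀ : x + z₀ = y := by rw [hz₀]; abel
    have hcu : ContinuousAt u y := by
      rw [hu]
      exact (hvc.continuousAt (hΩopen.mem_nhds hy)).sub
        (hwc.continuousAt (hΩopen.mem_nhds hy))
    have hmap : ContinuousAt (fun z => u (x + z)) z₀ := by
      have : ContinuousAt (fun z : Fin (n+1) → ℝ => x + z) z₀ :=
        (continuous_const.add continuous_id).continuousAt
      exact (hxz₀ ▸ hcu).comp this
    have hev : ∀ᶠ z in nhds z₀, u y / 2 < u (x + z) := by
      have : Filter.Tendsto (fun z => u (x + z)) (nhds z₀) (nhds (u y)) := by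
        have := hmap.tendsto; rwa [hxz₀] at this
      exact this.eventually (eventually_gt_nhds (half_lt_self huy))
    have hz₀ball : z₀ ∈ ball (0 : Fin (n+1) → ℝ) r₀ := by
      rw [mem_ball, dist_zero_right, hz₀, ← dist_eq_norm]
      exact mem_ball.mp hyball
    have hball : ∀ᶠ z in nhds z₀, z ∈ ball (0 : Fin (n+1) → ℝ) r₀ :=
      Filter.eventually_of_mem (isOpen_ball.mem_nhds hz₀ball) fun z hz => hz
    -- the set where both hold is a neighborhood of `z₀`, hence has positive measure
    have hT : {z : Fin (n+1) → ℝ | z ∈ ball (0 : Fin (n+1) → ℝ) r₀ ∧ u y / 2 < u (x + z)}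
        ∈ nhds z₀ := (hball.and hev)
    have hTpos : 0 < volume {z : Fin (n+1) → ℝ |
        z ∈ ball (0 : Fin (n+1) → ℝ) r₀ ∧ u y / 2 < u (x + z)} :=
      (volume : Measure (Fin (n+1) → ℝ)).measure_pos_of_mem_nhds hT
    -- but almost everywhere on that set `u (x + z) = 0`, contradiction
    have hbad : {z : Fin (n+1) → ℝ | z ∈ ball (0 : Fin (n+1) → ℝ) r₀ ∧ u y / 2 < u (x + z)}
        ⊆ {z | ¬ (z ∈ ball (0 : Fin (n+1) → ℝ) r₀ → z ≠ 0 → u (x + z) = 0)} ∪ {0} := by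
      intro z hz
      by_cases hz0 : z = 0
      · exact Or.inr hz0
      · left
        intro h
        have h3 := h hz.1 hz0
        have h4 := hz.2
        rw [h3] at h4
        linarith
    have hzero : volume {z : Fin (n+1) → ℝ |
        z ∈ ball (0 : Fin (n+1) → ℝ) r₀ ∧ u y / 2 < u (x + z)} = 0 := by
      apply measure_mono_null hbad
      apply le_antisymm _ zero_le
      calc volume ({z : Fin (n+1) → ℝ | ¬ (z ∈ ball (0 : Fin (n+1) → ℝ) r₀ → z ≠ 0 →
              u (x + z) = 0)} ∪ {0})
          ≤ volume {z : Fin (n+1) → ℝ | ¬ (z ∈ ball (0 : Fin (n+1) → ℝ) r₀ → z ≠ 0 →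
              u (x + z) = 0)} + volume ({0} : Set (Fin (n+1) → ℝ)) := measure_union_le _ _
        _ = 0 := by
            rw [measure_singleton, ae_iff.mp haez]; simp
    exact absurd hzero (ne_of_gt hTpos)
  -- Topological part: the zero set is clopen in the connected set `Ω`.
  set Z : Set (Fin (n+1) → ℝ) := {x | x ∈ Ω ∧ v x = w x} with hZ
  set U : Set (Fin (n+1) → ℝ) := ⋃ x ∈ Z, ball x (r₀ / 2) with hU
  have hUopen : IsOpen U := isOpen_biUnion fun _ _ => isOpen_ball
  have hZU : Z ⊆ U := fun x hx =>
    Set.mem_biUnion hx (mem_ball_self (by linarith))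
  have hUZ : Ω ∩ U ⊆ Z := by
    rintro y ⟨hyΩ, hyU⟩
    obtain ⟨x, hxZ, hyx⟩ := Set.mem_iUnion₂.mp hyU
    have : y ∈ ball x r₀ := mem_ball.mpr (lt_of_lt_of_le (mem_ball.mp hyx) (by linarith))
    exact ⟨hyΩ, key x hxZ.1 hxZ.2 y hyΩ this⟩
  have hcl : closure U ∩ Ω ⊆ U := by
    rintro y ⟨hyc, hyΩ⟩
    obtain ⟨p, hpU, hpy⟩ := Metric.mem_closure_iff.mp hyc (r₀ / 4) (by linarith)
    obtain ⟨x, hxZ, hpx⟩ := Set.mem_iUnion₂.mp hpU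
    have hyx : y ∈ ball x r₀ := by
      rw [mem_ball]
      calc dist y x ≤ dist y p + dist p x := dist_triangle _ _ _
        _ < r₀ / 4 + r₀ / 2 := add_lt_add hpy (mem_ball.mp hpx)
        _ < r₀ := by linarith
    exact hZU ⟨hyΩ, key x hxZ.1 hxZ.2 y hyΩ hyx⟩
  have hx₀Z : x₀ ∈ Z := ⟨hx₀, htouch⟩
  have hsub : Ω ⊆ U :=
    hΩconn.isPreconnected.subset_of_closure_inter_subset hUopen
      ⟨x₀, hx₀, hZU hx₀Z⟩ hcl
  intro x hx
  exact (hUZ ⟨hx, hsub hx⟩).2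
end

section
/- Let s ∈ (0,1), λ, r₀ > 0 and K : ℝ → [0,∞] even with K(x) ≥ λ𝟙_{(-r₀,r₀)}(x)|x|^{-(1+2s)}. Let v : ℝ → [-1,1] be continuous with v(0) = -1 and suppose L_K v(x) = 0 pointwise at every x where v(x) = -1 (e.g. v solves L_K v = W'(v) with W'(-1) = 0). Then v ≡ -1 on all of ℝ. -/
open MeasureTheory

theorem stmt_15 (s lam r₀ : ℝ) (hs : s ∈ Set.Ioo (0:ℝ) 1) (hlam : 0 < lam) (hr₀ : 0 < r₀)
    (K : ℝ → ℝ) (hKeven : ∀ x, K (-x) = K x) (hK0 : ∀ x, 0 ≤ K x)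
    (hKlow : ∀ x : ℝ, x ≠ 0 →
      (Set.Ioo (-r₀) r₀).indicator (fun x => lam * |x| ^ (-(1 + 2 * s))) x ≤ K x)
    (v : ℝ → ℝ) (hv : Continuous v) (hvr : ∀ x, v x ∈ Set.Icc (-1:ℝ) 1) (hv0 : v 0 = -1)
    (hLK : ∀ x, v x = -1 →
      Integrable (fun y => (v y - v x) * K (x - y)) ∧
      (∫ y, (v y - v x) * K (x - y)) = 0) :
    ∀ x, v x = -1 := by
  set S : Set ℝ := {x | v x = -1} with hS
  -- Key propagation step
  have key : ∀ x ∈ S, Set.Ioo (x - r₀) (x + r₀) ⊆ S := by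
    intro x hx y hy
    obtain ⟨hint, hzero⟩ := hLK x hx
    have hx' : v x = -1 := hx
    have hnonneg : ∀ z, 0 ≤ (v z - v x) * K (x - z) := by
      intro z
      apply mul_nonneg _ (hK0 _)
      have := (hvr z).1
      linarith [hx']
    have hae : (fun z => (v z - v x) * K (x - z)) =ᵐ[volume] 0 := by
      rw [← MeasureTheory.integral_eq_zero_iff_of_nonneg hnonneg hint]
      exact hzero
    have hnull : volume {z | (v z - v x) * K (x - z) ≠ 0} = 0 := by
      have := MeasureTheory.ae_iff.mp hae
      simpa using this
    -- show v y = -1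
    by_contra hvy
    have hvy' : -1 < v y := lt_of_le_of_ne (hvr y).1 (fun h => hvy h.symm)
    -- the open set where v > -1 inside the interval
    set U : Set ℝ := {z | -1 < v z} ∩ Set.Ioo (x - r₀) (x + r₀) with hU
    have hUopen : IsOpen U :=
      (isOpen_lt continuous_const hv).inter isOpen_Ioo
    have hUne : U.Nonempty := ⟨y, hvy', hy⟩
    have hUpos : 0 < volume U := hUopen.measure_pos volume hUne
    have hUsub : U ⊆ {z | (v z - v x) * K (x - z) ≠ 0} := by
      rintro z ⟨hz1, hz2⟩
      have hzx : z ≠ x := by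
        intro h
        have hz1' : -1 < v z := hz1
        rw [h, hx'] at hz1'; exact lt_irrefl _ hz1'
      have hxz : x - z ≠ 0 := sub_ne_zero.mpr (Ne.symm hzx)
      have hmem : x - z ∈ Set.Ioo (-r₀) r₀ := by
        constructor <;> [linarith [hz2.2]; linarith [hz2.1]]
      have hKpos : 0 < K (x - z) := by
        have h1 := hKlow (x - z) hxz
        rw [Set.indicator_of_mem hmem] at h1
        have : (0:ℝ) < lam * |x - z| ^ (-(1 + 2 * s)) :=
          mul_pos hlam (Real.rpow_pos_of_pos (abs_pos.mpr hxz) _)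
        linarith
      have : 0 < (v z - v x) * K (x - z) := by
        apply mul_pos _ hKpos
        have hz1' : -1 < v z := hz1
        rw [hx']; linarith
      exact ne_of_gt this
    exact absurd (measure_mono_null hUsub hnull) (ne_of_gt hUpos)
  have hclosed : IsClosed S := isClosed_eq hv continuous_const
  have hopen : IsOpen S := by
    rw [isOpen_iff_mem_nhds]
    intro x hx
    have : Set.Ioo (x - r₀) (x + r₀) ∈ nhds x :=
      Ioo_mem_nhds (by linarith) (by linarith)
    exact Filter.mem_of_superset this (key x hx)
  have : S = Set.univ :=
    IsClopen.eq_univ ⟨hclosed, hopen⟩ ⟨0, hv0⟩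
  intro x
  have : x ∈ S := this ▸ Set.mem_univ x
  exact this
end

section
/- Let s ∈ (0,1) and define Ψ_s(ρ) = ρ^{1-2s} if s ∈ (0,1/2), Ψ_s(ρ) = log ρ if s = 1/2, and Ψ_s(ρ) = 1 if s ∈ (1/2, 1). Let ψ : ℝ → [-1,1] be the piecewise-linear function equal to α for x ≤ -a, linearly interpolating from α to -1 on [-a, -a+2], equal to -1 on [-a+2, a-2], linearly interpolating from -1 to β on [a-2, a], and equal to β for x ≥ a, where α, β ∈ [-1,1] and a > 3. Then for K : ℝ → [0,∞] even with K(x) ≤ Λ|x|^{-(1+2s)}, there is C > 0 depending only on s and Λ such that (1/4)∬_{ℝ² \ ((ℝ\[-a,a])²)} |ψ(x)-ψ(y)|² K(x-y) dx dy ≤ C·Ψ_s(2a). -/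
open MeasureTheory Set ENNReal


lemma aux_V1 (p c : ℝ) (hp : 1 < p) (hc : 0 < c) :
    ∫⁻ t in Set.Ioi c, ENNReal.ofReal (t ^ (-p)) = ENNReal.ofReal (c ^ (1 - p) / (p - 1)) := by
  rw [← ofReal_integral_eq_lintegral_ofReal
      (integrableOn_Ioi_rpow_of_lt (by linarith) hc)
      ((ae_restrict_iff' measurableSet_Ioi).2 (Filter.Eventually.of_forall fun t ht =>
        Real.rpow_nonneg (le_of_lt (hc.trans ht)) _))]
  rw [integral_Ioi_rpow_of_lt (by linarith) hc]
  congr 1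
  rw [show (-p + 1 : ℝ) = 1 - p by ring]
  have h1 : (1:ℝ) - p ≠ 0 := by linarith
  have h2 : p - 1 ≠ 0 := by linarith
  field_simp
  ring

open intervalIntegral in
lemma aux_V2 (e c : ℝ) (he : -1 < e) (hc : 0 < c) :
    ∫⁻ t in Set.Ioc 0 c, ENNReal.ofReal (t ^ e) = ENNReal.ofReal (c ^ (e + 1) / (e + 1)) := by
  have hint : IntegrableOn (fun t : ℝ => t ^ e) (Set.Ioc 0 c) :=
    (intervalIntegrable_iff_integrableOn_Ioc_of_le hc.le).mp (intervalIntegral.intervalIntegrable_rpow' he)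
  rw [← ofReal_integral_eq_lintegral_ofReal hint
      ((ae_restrict_iff' measurableSet_Ioc).2 (Filter.Eventually.of_forall fun t ht =>
        Real.rpow_nonneg ht.1.le _))]
  congr 1
  rw [← intervalIntegral.integral_of_le hc.le, integral_rpow (Or.inl he)]
  rw [Real.zero_rpow (by linarith)]
  ring

lemma aux_subleft (g : ℝ → ℝ≥0∞) (z : ℝ) (A : Set ℝ) :
    ∫⁻ w in ((fun w : ℝ => z - w) ⁻¹' A), g (z - w) = ∫⁻ t in A, g t :=
  (Measure.measurePreserving_sub_left volume z).setLIntegral_comp_preimage_emb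
    (MeasurableEquiv.subLeft z).measurableEmbedding g A

lemma aux_subright (g : ℝ → ℝ≥0∞) (z : ℝ) (A : Set ℝ) :
    ∫⁻ w in ((fun w : ℝ => w - z) ⁻¹' A), g (w - z) = ∫⁻ t in A, g t :=
  (measurePreserving_sub_right volume z).setLIntegral_comp_preimage_emb
    (MeasurableEquiv.subRight z).measurableEmbedding g A

lemma aux_neg (g : ℝ → ℝ≥0∞) (A : Set ℝ) :
    ∫⁻ w in ((fun w : ℝ => -w) ⁻¹' A), g (-w) = ∫⁻ t in A, g t :=
  (Measure.measurePreserving_neg volume).setLIntegral_comp_preimage_emb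
    (MeasurableEquiv.neg ℝ).measurableEmbedding g A

-- reflection for even integrands
lemma aux_even_reflect (F : ℝ → ℝ≥0∞) (hF : ∀ t, F (-t) = F t) (A : Set ℝ) :
    ∫⁻ t in ((fun t : ℝ => -t) ⁻¹' A), F t = ∫⁻ t in A, F t := by
  calc ∫⁻ t in ((fun t : ℝ => -t) ⁻¹' A), F t
      = ∫⁻ t in ((fun t : ℝ => -t) ⁻¹' A), F (-t) := by
        apply lintegral_congr; intro t; rw [hF]
    _ = ∫⁻ t in A, F t := aux_neg F A

-- two-sided tail bound
lemma aux_tail (p c : ℝ) (hp : 1 < p) (hc : 0 < c) :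
    ∫⁻ t in {t : ℝ | c ≤ |t|}, ENNReal.ofReal (|t| ^ (-p))
      ≤ ENNReal.ofReal (2 * (c ^ (1 - p) / (p - 1))) := by
  have hset : {t : ℝ | c ≤ |t|} = Iic (-c) ∪ Ici c := by
    ext t
    simp only [mem_setOf_eq, mem_union, mem_Iic, mem_Ici, le_abs]
    constructor
    · rintro (h | h)
      · exact Or.inr h
      · exact Or.inl (by linarith)
    · rintro (h | h)
      · exact Or.inr (by linarith)
      · exact Or.inl h
  have hIci : ∫⁻ t in Ici c, ENNReal.ofReal (|t| ^ (-p))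
      = ENNReal.ofReal (c ^ (1 - p) / (p - 1)) := by
    rw [← setLIntegral_congr (Ioi_ae_eq_Ici (a := c))]
    rw [setLIntegral_congr_fun measurableSet_Ioi
      (fun t (ht : t ∈ Ioi c) => by
        rw [abs_of_pos (hc.trans ht)])]
    exact aux_V1 p c hp hc
  have hIic : ∫⁻ t in Iic (-c), ENNReal.ofReal (|t| ^ (-p))
      = ENNReal.ofReal (c ^ (1 - p) / (p - 1)) := by
    have h1 : Iic (-c) = (fun t : ℝ => -t) ⁻¹' (Ici c) := by
      ext t; simp only [mem_Iic, mem_preimage, mem_Ici]; constructor <;> intro <;> linarith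
    rw [h1, aux_even_reflect _ (fun t => by rw [abs_neg]) (Ici c)]
    exact hIci
  calc ∫⁻ t in {t : ℝ | c ≤ |t|}, ENNReal.ofReal (|t| ^ (-p))
      ≤ (∫⁻ t in Iic (-c), ENNReal.ofReal (|t| ^ (-p)))
        + (∫⁻ t in Ici c, ENNReal.ofReal (|t| ^ (-p))) := by
        rw [hset]; exact lintegral_union_le _ _ _
    _ = ENNReal.ofReal (c ^ (1 - p) / (p - 1)) + ENNReal.ofReal (c ^ (1 - p) / (p - 1)) := by
        rw [hIic, hIci]
    _ = ENNReal.ofReal (2 * (c ^ (1 - p) / (p - 1))) := by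
        rw [← ENNReal.ofReal_add (div_nonneg (Real.rpow_nonneg hc.le _) (by linarith)) (div_nonneg (Real.rpow_nonneg hc.le _) (by linarith))]; ring_nf

-- near-zero two-sided bound
lemma aux_near (e : ℝ) (he : -1 < e) :
    ∫⁻ t in Icc (-1 : ℝ) 1, ENNReal.ofReal (|t| ^ e)
      ≤ ENNReal.ofReal (2 * (1 / (e + 1))) := by
  have hIoc : ∫⁻ t in Ioc (0:ℝ) 1, ENNReal.ofReal (|t| ^ e)
      = ENNReal.ofReal (1 / (e + 1)) := by
    rw [setLIntegral_congr_fun measurableSet_Ioc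
      (fun t (ht : t ∈ Ioc (0:ℝ) 1) => by
        rw [abs_of_pos ht.1])]
    have := aux_V2 e 1 he one_pos
    rwa [Real.one_rpow] at this
  have hIcc0 : ∫⁻ t in Icc (-1:ℝ) 0, ENNReal.ofReal (|t| ^ e)
      = ENNReal.ofReal (1 / (e + 1)) := by
    have h1 : Icc (-1:ℝ) 0 = (fun t : ℝ => -t) ⁻¹' (Icc 0 1) := by
      ext t; simp only [mem_Icc, mem_preimage]
      constructor <;> rintro ⟨h1, h2⟩ <;> constructor <;> linarith
    rw [h1, aux_even_reflect _ (fun t => by rw [abs_neg]) (Icc 0 1)]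
    rw [← setLIntegral_congr (Ioc_ae_eq_Icc (a := (0:ℝ)) (b := 1))]
    exact hIoc
  calc ∫⁻ t in Icc (-1 : ℝ) 1, ENNReal.ofReal (|t| ^ e)
      ≤ ∫⁻ t in Icc (-1:ℝ) 0 ∪ Ioc 0 1, ENNReal.ofReal (|t| ^ e) := by
        apply lintegral_mono_set
        intro t ht
        rcases le_or_gt t 0 with h | h
        · exact Or.inl ⟨ht.1, h⟩
        · exact Or.inr ⟨h, ht.2⟩
    _ ≤ _ + _ := lintegral_union_le _ _ _
    _ ≤ ENNReal.ofReal (2 * (1 / (e + 1))) := by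
        rw [hIcc0, hIoc, ← ENNReal.ofReal_add (div_nonneg zero_le_one (by linarith)) (div_nonneg zero_le_one (by linarith))]
        apply ENNReal.ofReal_le_ofReal; linarith


lemma aux_J (s Λ : ℝ) (hs1 : 0 < s) (hs2 : s < 1) (hΛ : 0 < Λ) :
    ∫⁻ t : ℝ, ENNReal.ofReal ((4 * min 1 (t ^ 2)) * (Λ * |t| ^ (-(1 + 2 * s))))
      ≤ ENNReal.ofReal (4 * Λ * (2 / (2 - 2 * s) + 2 / (2 * s))) := by
  have key : ∀ t : ℝ, ENNReal.ofReal ((4 * min 1 (t ^ 2)) * (Λ * |t| ^ (-(1 + 2 * s))))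
      ≤ (Icc (-1:ℝ) 1).indicator (fun t => ENNReal.ofReal (4 * Λ) * ENNReal.ofReal (|t| ^ (1 - 2 * s))) t
        + {t : ℝ | 1 ≤ |t|}.indicator (fun t => ENNReal.ofReal (4 * Λ) * ENNReal.ofReal (|t| ^ (-(1 + 2 * s)))) t := by
    intro t
    rcases le_or_gt (|t|) 1 with h | h
    · refine le_trans ?_ (self_le_add_right _ _)
      rw [indicator_of_mem (mem_Icc.mpr (abs_le.mp h))]
      rw [← ENNReal.ofReal_mul (by positivity)]
      apply ENNReal.ofReal_le_ofReal
      have ht2 : t ^ 2 ≤ 1 := by nlinarith [sq_abs t, abs_nonneg t]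
      rw [min_eq_right ht2]
      have hkey : t ^ 2 * |t| ^ (-(1 + 2 * s)) ≤ |t| ^ (1 - 2 * s) := by
        rcases eq_or_ne t 0 with rfl | ht
        · simp [Real.rpow_nonneg]
        · have habs : (0:ℝ) < |t| := abs_pos.mpr ht
          rw [← sq_abs t, ← Real.rpow_natCast |t| 2]
          rw [← Real.rpow_add habs]
          apply le_of_eq; congr 1; push_cast; ring
      calc (4 * t ^ 2) * (Λ * |t| ^ (-(1 + 2 * s)))
          = 4 * Λ * (t ^ 2 * |t| ^ (-(1 + 2 * s))) := by ring
        _ ≤ 4 * Λ * |t| ^ (1 - 2 * s) := by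
            apply mul_le_mul_of_nonneg_left hkey (by positivity)
    · refine le_trans ?_ (self_le_add_left _ _)
      rw [indicator_of_mem (show t ∈ {t : ℝ | 1 ≤ |t|} from h.le)]
      rw [← ENNReal.ofReal_mul (by positivity)]
      apply ENNReal.ofReal_le_ofReal
      calc (4 * min 1 (t ^ 2)) * (Λ * |t| ^ (-(1 + 2 * s)))
          ≤ (4 * 1) * (Λ * |t| ^ (-(1 + 2 * s))) := by
            apply mul_le_mul_of_nonneg_right _ (by positivity)
            have := min_le_left 1 (t ^ 2); linarith
        _ = 4 * Λ * |t| ^ (-(1 + 2 * s)) := by ring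
  calc ∫⁻ t : ℝ, ENNReal.ofReal ((4 * min 1 (t ^ 2)) * (Λ * |t| ^ (-(1 + 2 * s))))
      ≤ ∫⁻ t : ℝ, ((Icc (-1:ℝ) 1).indicator (fun t => ENNReal.ofReal (4 * Λ) * ENNReal.ofReal (|t| ^ (1 - 2 * s))) t
        + {t : ℝ | 1 ≤ |t|}.indicator (fun t => ENNReal.ofReal (4 * Λ) * ENNReal.ofReal (|t| ^ (-(1 + 2 * s)))) t) :=
        lintegral_mono key
    _ = (∫⁻ t in Icc (-1:ℝ) 1, ENNReal.ofReal (4 * Λ) * ENNReal.ofReal (|t| ^ (1 - 2 * s)))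
        + (∫⁻ t in {t : ℝ | 1 ≤ |t|}, ENNReal.ofReal (4 * Λ) * ENNReal.ofReal (|t| ^ (-(1 + 2 * s)))) := by
        rw [lintegral_add_left]
        · rw [lintegral_indicator measurableSet_Icc, lintegral_indicator]
          exact measurableSet_le measurable_const (by fun_prop)
        · exact Measurable.indicator (by fun_prop) measurableSet_Icc
    _ = ENNReal.ofReal (4 * Λ) * ((∫⁻ t in Icc (-1:ℝ) 1, ENNReal.ofReal (|t| ^ (1 - 2 * s)))
        + (∫⁻ t in {t : ℝ | 1 ≤ |t|}, ENNReal.ofReal (|t| ^ (-(1 + 2 * s))))) := by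
        rw [lintegral_const_mul _ (by fun_prop), lintegral_const_mul _ (by fun_prop), mul_add]
    _ ≤ ENNReal.ofReal (4 * Λ) * (ENNReal.ofReal (2 * (1 / (2 - 2 * s))) + ENNReal.ofReal (2 * (1 / (2 * s)))) := by
        apply mul_le_mul_right ; apply add_le_add
        · have := aux_near (1 - 2 * s) (by linarith)
          rwa [show (1 - 2 * s + 1 : ℝ) = 2 - 2 * s by ring] at this
        · have := aux_tail (1 + 2 * s) 1 (by linarith) one_pos
          rwa [show (1 - (1 + 2 * s) : ℝ) = -(2 * s) by ring,
            show (1 + 2 * s - 1 : ℝ) = 2 * s by ring, Real.one_rpow] at this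
    _ ≤ ENNReal.ofReal (4 * Λ * (2 / (2 - 2 * s) + 2 / (2 * s))) := by
        rw [← ENNReal.ofReal_add
            (mul_nonneg (by norm_num) (div_nonneg zero_le_one (by linarith)))
            (mul_nonneg (by norm_num) (div_nonneg zero_le_one (by linarith))),
          ← ENNReal.ofReal_mul (by linarith)]
        apply ENNReal.ofReal_le_ofReal
        apply mul_le_mul_of_nonneg_left _ (by linarith)
        apply le_of_eq; ring

lemma aux_inner (s Λ d : ℝ) (hs1 : 0 < s) (hΛ : 0 < Λ) (hd : 0 < d) :
    ∫⁻ t in {t : ℝ | d ≤ |t|}, ENNReal.ofReal ((4 * min 1 (t ^ 2)) * (Λ * |t| ^ (-(1 + 2 * s))))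
      ≤ ENNReal.ofReal ((8 * Λ / (2 * s)) * d ^ (-(2 * s))) := by
  calc ∫⁻ t in {t : ℝ | d ≤ |t|}, ENNReal.ofReal ((4 * min 1 (t ^ 2)) * (Λ * |t| ^ (-(1 + 2 * s))))
      ≤ ∫⁻ t in {t : ℝ | d ≤ |t|}, ENNReal.ofReal (4 * Λ) * ENNReal.ofReal (|t| ^ (-(1 + 2 * s))) := by
        apply lintegral_mono; intro t; dsimp only
        rw [← ENNReal.ofReal_mul (by positivity)]
        apply ENNReal.ofReal_le_ofReal
        calc (4 * min 1 (t ^ 2)) * (Λ * |t| ^ (-(1 + 2 * s)))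
            ≤ (4 * 1) * (Λ * |t| ^ (-(1 + 2 * s))) := by
              apply mul_le_mul_of_nonneg_right _ (by positivity)
              have := min_le_left 1 (t ^ 2); linarith
          _ = 4 * Λ * |t| ^ (-(1 + 2 * s)) := by ring
    _ = ENNReal.ofReal (4 * Λ) * ∫⁻ t in {t : ℝ | d ≤ |t|}, ENNReal.ofReal (|t| ^ (-(1 + 2 * s))) := by
        rw [lintegral_const_mul _ (by fun_prop)]
    _ ≤ ENNReal.ofReal (4 * Λ) * ENNReal.ofReal (2 * (d ^ (-(2 * s)) / (2 * s))) := by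
        apply mul_le_mul_right
        have := aux_tail (1 + 2 * s) d (by linarith) hd
        rwa [show (1 - (1 + 2 * s) : ℝ) = -(2 * s) by ring,
          show (1 + 2 * s - 1 : ℝ) = 2 * s by ring] at this
    _ = ENNReal.ofReal ((8 * Λ / (2 * s)) * d ^ (-(2 * s))) := by
        rw [← ENNReal.ofReal_mul (by positivity)]
        congr 1; field_simp; ring

lemma aux_M (s a : ℝ) (hs1 : 0 < s) (ha : 3 < a) :
    ∫⁻ x in Icc (-a + 2) (a - 2), ENNReal.ofReal ((min (a - x) (x + a)) ^ (-(2 * s)))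
      ≤ 2 * ∫⁻ u in Ioc 1 (2 * a), ENNReal.ofReal (u ^ (-(2 * s))) := by
  have hsub : Icc (2:ℝ) (2 * a - 2) ⊆ Ioc 1 (2 * a) := fun u hu => ⟨by linarith [hu.1], by linarith [hu.2]⟩
  have piece1 : ∫⁻ x in Icc (-a + 2) (a - 2), ENNReal.ofReal ((a - x) ^ (-(2 * s)))
      ≤ ∫⁻ u in Ioc 1 (2 * a), ENNReal.ofReal (u ^ (-(2 * s))) := by
    have hpre : (fun w : ℝ => a - w) ⁻¹' (Icc 2 (2 * a - 2)) = Icc (-a + 2) (a - 2) := by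
      ext x; simp only [mem_preimage, mem_Icc]
      constructor <;> rintro ⟨h1, h2⟩ <;> exact ⟨by linarith, by linarith⟩
    rw [← hpre, aux_subleft (fun u => ENNReal.ofReal (u ^ (-(2 * s)))) a (Icc 2 (2 * a - 2))]
    exact lintegral_mono_set hsub
  have piece2 : ∫⁻ x in Icc (-a + 2) (a - 2), ENNReal.ofReal ((x + a) ^ (-(2 * s)))
      ≤ ∫⁻ u in Ioc 1 (2 * a), ENNReal.ofReal (u ^ (-(2 * s))) := by
    have hpre : (fun w : ℝ => w - (-a)) ⁻¹' (Icc 2 (2 * a - 2)) = Icc (-a + 2) (a - 2) := by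
      ext x; simp only [mem_preimage, mem_Icc]
      constructor <;> rintro ⟨h1, h2⟩ <;> exact ⟨by linarith, by linarith⟩
    have : ∀ x : ℝ, (x + a) = (x - (-a)) := fun x => by ring
    simp only [this]
    rw [← hpre, aux_subright (fun u => ENNReal.ofReal (u ^ (-(2 * s)))) (-a) (Icc 2 (2 * a - 2))]
    exact lintegral_mono_set hsub
  calc ∫⁻ x in Icc (-a + 2) (a - 2), ENNReal.ofReal ((min (a - x) (x + a)) ^ (-(2 * s)))
      ≤ ∫⁻ x in Icc (-a + 2) (a - 2),
          (ENNReal.ofReal ((a - x) ^ (-(2 * s))) + ENNReal.ofReal ((x + a) ^ (-(2 * s)))) := by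
        apply lintegral_mono; intro x; dsimp only
        rcases min_cases (a - x) (x + a) with ⟨h1, _⟩ | ⟨h1, _⟩ <;> rw [h1]
        · exact self_le_add_right _ _
        · exact self_le_add_left _ _
    _ = (∫⁻ x in Icc (-a + 2) (a - 2), ENNReal.ofReal ((a - x) ^ (-(2 * s))))
        + (∫⁻ x in Icc (-a + 2) (a - 2), ENNReal.ofReal ((x + a) ^ (-(2 * s)))) :=
        lintegral_add_left (by fun_prop) _
    _ ≤ (∫⁻ u in Ioc 1 (2 * a), ENNReal.ofReal (u ^ (-(2 * s))))
        + (∫⁻ u in Ioc 1 (2 * a), ENNReal.ofReal (u ^ (-(2 * s)))) := add_le_add piece1 piece2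
    _ = 2 * ∫⁻ u in Ioc 1 (2 * a), ENNReal.ofReal (u ^ (-(2 * s))) := (two_mul _).symm


open intervalIntegral in
lemma aux_log (b : ℝ) (hb : 1 < b) :
    ∫ u in Set.Ioc 1 b, u ^ (-1:ℝ) = Real.log b := by
  rw [← intervalIntegral.integral_of_le hb.le]
  simp only [Real.rpow_neg_one]
  rw [integral_inv (by rw [Set.uIcc_of_le hb.le]; intro h; linarith [h.1])]
  rw [div_one]

set_option maxHeartbeats 2000000 in
theorem stmt_17 (s Λ : ℝ) (hs : s ∈ Set.Ioo (0:ℝ) 1) (hΛ : 0 < Λ) :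
    ∃ C > 0, ∀ (a α β : ℝ), 3 < a → α ∈ Set.Icc (-1:ℝ) 1 → β ∈ Set.Icc (-1:ℝ) 1 →
      ∀ K : ℝ → ℝ, (∀ x, 0 ≤ K x) → (∀ x, K (-x) = K x) →
        (∀ x : ℝ, K x ≤ Λ * |x| ^ (-(1 + 2 * s))) →
        ∀ ψ : ℝ → ℝ,
          (∀ x ≤ -a, ψ x = α) →
          (∀ x ∈ Set.Icc (-a) (-a + 2), ψ x = α + (x + a) * (-1 - α) / 2) →
          (∀ x ∈ Set.Icc (-a + 2) (a - 2), ψ x = -1) →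
          (∀ x ∈ Set.Icc (a - 2) a, ψ x = -1 + (x - (a - 2)) * (β + 1) / 2) →
          (∀ x ≥ a, ψ x = β) →
          (1 / 4) * (∫ p in {p : ℝ × ℝ | p.1 ∈ Set.Icc (-a) a ∨ p.2 ∈ Set.Icc (-a) a},
              |ψ p.1 - ψ p.2| ^ 2 * K (p.1 - p.2))
            ≤ C * (if s < 1 / 2 then (2 * a) ^ (1 - 2 * s)
                   else if s = 1 / 2 then Real.log (2 * a) else 1) := by
  obtain ⟨hs1, hs2⟩ := hs
  have h2s : (0:ℝ) < 2 * s := by linarith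
  have h22s : (0:ℝ) < 2 - 2 * s := by linarith
  set κ : ℝ := if s < 1/2 then 1/(1-2*s) else if s = 1/2 then 1 else 1/(2*s-1) with hκdef
  have hκ : 0 ≤ κ := by
    rw [hκdef]; split_ifs with hc1 hc2
    · apply div_nonneg zero_le_one; linarith
    · norm_num
    · have : 1/2 < s := lt_of_le_of_ne (not_lt.mp hc1) (Ne.symm hc2)
      apply div_nonneg zero_le_one; linarith
  set cJ : ℝ := 4 * Λ * (2 / (2 - 2 * s) + 2 / (2 * s)) with hcJdef
  have hcJ : 0 ≤ cJ := by
    rw [hcJdef]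
    apply mul_nonneg (by linarith)
    apply add_nonneg <;> apply div_nonneg (by norm_num) (by linarith)
  set cM : ℝ := 8 * Λ / (2 * s) with hcMdef
  have hcM : 0 ≤ cM := by rw [hcMdef]; apply div_nonneg (by linarith) (by linarith)
  refine ⟨8 * cJ + 4 * cM * κ + 1, by nlinarith, ?_⟩
  intro a α β ha hα hβ K hK0 hKe hKb ψ h1 h2 h3 h4 h5
  -- basic sets
  set Ic : Set ℝ := Icc (-a) a with hIcdef
  set Ms : Set ℝ := Icc (-a + 2) (a - 2) with hMsdef
  set Es : Set ℝ := Ic \ Ms with hEsdef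
  set S : Set (ℝ × ℝ) := {p : ℝ × ℝ | p.1 ∈ Icc (-a) a ∨ p.2 ∈ Icc (-a) a} with hSdef
  set Ψ : ℝ := if s < 1/2 then (2 * a) ^ (1 - 2 * s) else if s = 1/2 then Real.log (2 * a) else 1
    with hΨdef
  have hΨ1 : 1 ≤ Ψ := by
    rw [hΨdef]; split_ifs with hc1 hc2
    · exact Real.one_le_rpow (by linarith) (by linarith)
    · rw [Real.le_log_iff_exp_le (by linarith)]
      have := Real.exp_one_lt_d9; linarith
    · exact le_refl 1
  have hΨ0 : 0 ≤ Ψ := by linarith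
  -- properties of ψ
  obtain ⟨hα1, hα2⟩ := hα
  obtain ⟨hβ1, hβ2⟩ := hβ
  have hrange : ∀ x, -1 ≤ ψ x ∧ ψ x ≤ 1 := by
    intro x
    rcases le_total x (-a) with h | h
    · rw [h1 x h]; exact ⟨hα1, hα2⟩
    · rcases le_total x (-a + 2) with h' | h'
      · rw [h2 x ⟨h, h'⟩]; constructor <;> nlinarith
      · rcases le_total x (a - 2) with h'' | h''
        · rw [h3 x ⟨h', h''⟩]; norm_num
        · rcases le_total x a with h''' | h'''
          · rw [h4 x ⟨h'', h'''⟩]; constructor <;> nlinarith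
          · rw [h5 x h''']; exact ⟨hβ1, hβ2⟩
  have hrep : ∀ x, ψ x = α + ((-1 - α)/2) * (max 0 (min (x + a) 2))
      + ((β + 1)/2) * (max 0 (min (x - (a - 2)) 2)) := by
    intro x
    rcases le_total x (-a) with h | h
    · rw [h1 x h, min_eq_left (by linarith : x + a ≤ 2), max_eq_left (by linarith : x + a ≤ 0),
        min_eq_left (by linarith : x - (a-2) ≤ 2), max_eq_left (by linarith : x - (a-2) ≤ 0)]
      ring
    · rcases le_total x (-a + 2) with h' | h'
      · rw [h2 x ⟨h, h'⟩, min_eq_left (by linarith : x + a ≤ 2),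
          max_eq_right (by linarith : 0 ≤ x + a),
          min_eq_left (by linarith : x - (a-2) ≤ 2), max_eq_left (by linarith : x - (a-2) ≤ 0)]
        ring
      · rcases le_total x (a - 2) with h'' | h''
        · rw [h3 x ⟨h', h''⟩, min_eq_right (by linarith : (2:ℝ) ≤ x + a),
            max_eq_right (by linarith : (0:ℝ) ≤ (2:ℝ)),
            min_eq_left (by linarith : x - (a-2) ≤ 2), max_eq_left (by linarith : x - (a-2) ≤ 0)]
          ring
        · rcases le_total x a with h''' | h'''
          · rw [h4 x ⟨h'', h'''⟩, min_eq_right (by linarith : (2:ℝ) ≤ x + a),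
              max_eq_right (by linarith : (0:ℝ) ≤ (2:ℝ)),
              min_eq_left (by linarith : x - (a-2) ≤ 2),
              max_eq_right (by linarith : 0 ≤ x - (a-2))]
            ring
          · rw [h5 x h''', min_eq_right (by linarith : (2:ℝ) ≤ x + a),
              max_eq_right (by linarith : (0:ℝ) ≤ (2:ℝ)),
              min_eq_right (by linarith : (2:ℝ) ≤ x - (a-2)),
              max_eq_right (by linarith : (0:ℝ) ≤ (2:ℝ))]
            ring
  have clamp_lip : ∀ u v : ℝ, |max 0 (min u 2) - max 0 (min v 2)| ≤ |u - v| := by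
    intro u v
    calc |max 0 (min u 2) - max 0 (min v 2)|
        = |max (min u 2) 0 - max (min v 2) 0| := by rw [max_comm 0 (min u 2), max_comm 0 (min v 2)]
      _ ≤ |min u 2 - min v 2| := abs_max_sub_max_le_abs _ _ _
      _ ≤ max |u - v| |2 - 2| := abs_min_sub_min_le_max _ _ _ _
      _ = |u - v| := by simp
  have hlip : ∀ x y : ℝ, |ψ x - ψ y| ≤ 2 * |x - y| := by
    intro x y
    have hxy : ψ x - ψ y = ((-1 - α)/2) * (max 0 (min (x + a) 2) - max 0 (min (y + a) 2))
        + ((β + 1)/2) * (max 0 (min (x - (a - 2)) 2) - max 0 (min (y - (a - 2)) 2)) := by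
      rw [hrep x, hrep y]; ring
    have e1 : |(-1 - α)/2| ≤ 1 := abs_le.mpr ⟨by linarith, by linarith⟩
    have e2 : |(β + 1)/2| ≤ 1 := abs_le.mpr ⟨by linarith, by linarith⟩
    have d1 : |max 0 (min (x + a) 2) - max 0 (min (y + a) 2)| ≤ |x - y| := by
      have := clamp_lip (x + a) (y + a)
      rwa [show x + a - (y + a) = x - y by ring] at this
    have d2 : |max 0 (min (x - (a - 2)) 2) - max 0 (min (y - (a - 2)) 2)| ≤ |x - y| := by
      have := clamp_lip (x - (a - 2)) (y - (a - 2))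
      rwa [show x - (a - 2) - (y - (a - 2)) = x - y by ring] at this
    rw [hxy]
    calc |((-1 - α)/2) * (max 0 (min (x + a) 2) - max 0 (min (y + a) 2))
        + ((β + 1)/2) * (max 0 (min (x - (a - 2)) 2) - max 0 (min (y - (a - 2)) 2))|
        ≤ |((-1 - α)/2) * (max 0 (min (x + a) 2) - max 0 (min (y + a) 2))|
          + |((β + 1)/2) * (max 0 (min (x - (a - 2)) 2) - max 0 (min (y - (a - 2)) 2))| :=
          abs_add_le _ _
      _ = |(-1 - α)/2| * |max 0 (min (x + a) 2) - max 0 (min (y + a) 2)|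
          + |(β + 1)/2| * |max 0 (min (x - (a - 2)) 2) - max 0 (min (y - (a - 2)) 2)| := by
          rw [abs_mul, abs_mul]
      _ ≤ 1 * |x - y| + 1 * |x - y| := by
          apply add_le_add <;>
            exact mul_le_mul (by assumption) (by assumption) (abs_nonneg _) zero_le_one
      _ = 2 * |x - y| := by ring
  have hsq : ∀ x y : ℝ, |ψ x - ψ y| ^ 2 ≤ 4 * min 1 ((x - y) ^ 2) := by
    intro x y
    have hb2 : |ψ x - ψ y| ≤ 2 := by
      have rx := hrange x; have ry := hrange y
      exact abs_le.mpr ⟨by linarith [rx.1, ry.2], by linarith [rx.2, ry.1]⟩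
    rcases le_total 1 ((x - y) ^ 2) with h | h
    · rw [min_eq_left h]
      refine le_trans (pow_le_pow_left₀ (abs_nonneg _) hb2 2) ?_
      norm_num
    · rw [min_eq_right h]
      refine le_trans (pow_le_pow_left₀ (abs_nonneg _) (hlip x y) 2) ?_
      rw [mul_pow, sq_abs]
      norm_num
  -- dominating kernel
  set kk : ℝ → ℝ≥0∞ := fun t => ENNReal.ofReal ((4 * min 1 (t ^ 2)) * (Λ * |t| ^ (-(1 + 2 * s))))
    with hkkdef
  have hkkmeas : Measurable kk := by rw [hkkdef]; fun_prop
  have hmeas2 : Measurable (fun p : ℝ × ℝ => kk (p.1 - p.2)) :=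
    hkkmeas.comp (measurable_fst.sub measurable_snd)
  have hdom : ∀ q : ℝ × ℝ, ENNReal.ofReal (|ψ q.1 - ψ q.2| ^ 2 * K (q.1 - q.2))
      ≤ ((Ms ×ˢ Ms)ᶜ).indicator (fun q : ℝ × ℝ => kk (q.1 - q.2)) q := by
    intro q
    by_cases hq : q ∈ Ms ×ˢ Ms
    · obtain ⟨hq1, hq2⟩ := hq
      calc ENNReal.ofReal (|ψ q.1 - ψ q.2| ^ 2 * K (q.1 - q.2)) = 0 := by
            rw [h3 _ hq1, h3 _ hq2]; norm_num
        _ ≤ _ := zero_le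
    · rw [indicator_of_mem (mem_compl hq)]
      apply ENNReal.ofReal_le_ofReal
      exact mul_le_mul (hsq _ _) (hKb _) (hK0 _)
        (mul_nonneg (by norm_num) (le_min zero_le_one (sq_nonneg _)))
  -- J bound
  have hJ : ∫⁻ t, kk t ≤ ENNReal.ofReal cJ := by
    rw [hkkdef, hcJdef]; exact aux_J s Λ hs1 hs2 hΛ
  -- volume of Es
  have hvolE : volume Es ≤ ENNReal.ofReal 4 := by
    have hsub : Es ⊆ Icc (-a) (-a + 2) ∪ Icc (a - 2) a := by
      rintro x ⟨hxI, hxM⟩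
      rw [hIcdef, mem_Icc] at hxI
      rw [hMsdef, mem_Icc] at hxM
      rcases not_and_or.mp hxM with h | h
      · push_neg at h; exact Or.inl ⟨hxI.1, by linarith⟩
      · push_neg at h; exact Or.inr ⟨by linarith, hxI.2⟩
    calc volume Es ≤ volume (Icc (-a) (-a+2) ∪ Icc (a-2) a) := measure_mono hsub
      _ ≤ volume (Icc (-a) (-a+2)) + volume (Icc (a-2) a) := measure_union_le _ _
      _ = ENNReal.ofReal 4 := by
          rw [Real.volume_Icc, Real.volume_Icc, show -a + 2 - (-a) = (2:ℝ) by ring,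
            show a - (a - 2) = (2:ℝ) by ring, ← ENNReal.ofReal_add (by norm_num) (by norm_num)]
          norm_num
  -- inner translation identities
  have hinnerJ1 : ∀ x : ℝ, (∫⁻ y, kk (x - y)) = ∫⁻ t, kk t := by
    intro x
    have := aux_subleft kk x univ
    simpa using this
  have hinnerJ2 : ∀ y : ℝ, (∫⁻ x, kk (x - y)) = ∫⁻ t, kk t := by
    intro y
    have := aux_subright kk y univ
    simpa using this
  -- E pieces
  have hE1 : ∫⁻ p in Es ×ˢ (univ : Set ℝ), kk (p.1 - p.2) ≤ ENNReal.ofReal (cJ * 4) := by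
    rw [Measure.volume_eq_prod, ← Measure.prod_restrict, Measure.restrict_univ,
      lintegral_prod _ hmeas2.aemeasurable]
    calc ∫⁻ x in Es, ∫⁻ y, kk (x - y)
        = ∫⁻ _ in Es, ∫⁻ t, kk t := by apply lintegral_congr; intro x; rw [hinnerJ1]
      _ = (∫⁻ t, kk t) * volume Es := setLIntegral_const _ _
      _ ≤ ENNReal.ofReal cJ * ENNReal.ofReal 4 := mul_le_mul' hJ hvolE
      _ = ENNReal.ofReal (cJ * 4) := (ENNReal.ofReal_mul hcJ).symm
  have hE2 : ∫⁻ p in (univ : Set ℝ) ×ˢ Es, kk (p.1 - p.2) ≤ ENNReal.ofReal (cJ * 4) := by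
    rw [Measure.volume_eq_prod, ← Measure.prod_restrict, Measure.restrict_univ,
      lintegral_prod_symm _ hmeas2.aemeasurable]
    calc ∫⁻ y in Es, ∫⁻ x, kk (x - y)
        = ∫⁻ _ in Es, ∫⁻ t, kk t := by apply lintegral_congr; intro y; rw [hinnerJ2]
      _ = (∫⁻ t, kk t) * volume Es := setLIntegral_const _ _
      _ ≤ ENNReal.ofReal cJ * ENNReal.ofReal 4 := mul_le_mul' hJ hvolE
      _ = ENNReal.ofReal (cJ * 4) := (ENNReal.ofReal_mul hcJ).symm
  -- W bound
  have hWbound : ∫⁻ u in Ioc 1 (2*a), ENNReal.ofReal (u ^ (-(2*s))) ≤ ENNReal.ofReal (κ * Ψ) := by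
    by_cases hc1 : s < 1/2
    · calc ∫⁻ u in Ioc 1 (2*a), ENNReal.ofReal (u ^ (-(2*s)))
          ≤ ∫⁻ u in Ioc 0 (2*a), ENNReal.ofReal (u ^ (-(2*s))) :=
            lintegral_mono_set (fun u hu => ⟨by linarith [hu.1], hu.2⟩)
        _ = ENNReal.ofReal ((2*a) ^ (-(2*s) + 1) / (-(2*s) + 1)) :=
            aux_V2 (-(2*s)) (2*a) (by linarith) (by linarith)
        _ = ENNReal.ofReal (κ * Ψ) := by
            rw [hκdef, hΨdef, if_pos hc1, if_pos hc1, show (-(2*s) + 1 : ℝ) = 1 - 2*s by ring]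
            congr 1; ring
    · by_cases hc2 : s = 1/2
      · have hexp : -(2*s) = (-1 : ℝ) := by rw [hc2]; norm_num
        have h2a : (1:ℝ) < 2*a := by linarith
        rw [hexp, hκdef, hΨdef, if_neg hc1, if_neg hc1, if_pos hc2, if_pos hc2, one_mul]
        have hcont : IntegrableOn (fun u : ℝ => u ^ (-1 : ℝ)) (Ioc 1 (2*a)) := by
          apply IntegrableOn.mono_set _ Ioc_subset_Icc_self
          apply ContinuousOn.integrableOn_Icc
          apply ContinuousOn.rpow_const continuousOn_id
          intro x hx
          exact Or.inl (by intro h; simp only [id_eq] at h; rw [h] at hx; linarith [hx.1])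
        rw [← ofReal_integral_eq_lintegral_ofReal hcont
          ((ae_restrict_iff' measurableSet_Ioc).2 (Filter.Eventually.of_forall
            (fun u hu => Real.rpow_nonneg (by linarith [hu.1]) _)))]
        apply le_of_eq
        congr 1
        exact aux_log (2*a) h2a
      · have h12 : 1/2 < s := lt_of_le_of_ne (not_lt.mp hc1) (Ne.symm hc2)
        calc ∫⁻ u in Ioc 1 (2*a), ENNReal.ofReal (u ^ (-(2*s)))
            ≤ ∫⁻ u in Ioi 1, ENNReal.ofReal (u ^ (-(2*s))) :=
              lintegral_mono_set (fun u hu => hu.1)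
          _ = ENNReal.ofReal ((1:ℝ) ^ (1 - 2*s) / (2*s - 1)) := aux_V1 (2*s) 1 (by linarith) one_pos
          _ = ENNReal.ofReal (κ * Ψ) := by
              rw [hκdef, hΨdef, if_neg hc1, if_neg hc1, if_neg hc2, if_neg hc2, Real.one_rpow]
              congr 1; ring
  -- M pieces
  have hinner1 : ∀ z, z ∈ Ms → (∫⁻ t in {t : ℝ | min (a - z) (z + a) ≤ |t|}, kk t)
      ≤ ENNReal.ofReal (cM * (min (a - z) (z + a)) ^ (-(2*s))) := by
    intro z hz
    rw [hMsdef, mem_Icc] at hz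
    have hd : 0 < min (a - z) (z + a) := lt_min (by linarith [hz.2]) (by linarith [hz.1])
    have := aux_inner s Λ (min (a - z) (z + a)) hs1 hΛ hd
    rw [hkkdef, hcMdef]
    exact this
  have hM1 : ∫⁻ p in Ms ×ˢ Icᶜ, kk (p.1 - p.2) ≤ ENNReal.ofReal (cM * (2 * (κ * Ψ))) := by
    rw [Measure.volume_eq_prod, ← Measure.prod_restrict, lintegral_prod _ hmeas2.aemeasurable]
    calc ∫⁻ x in Ms, ∫⁻ y in Icᶜ, kk (x - y)
        ≤ ∫⁻ x in Ms, ENNReal.ofReal (cM * (min (a - x) (x + a)) ^ (-(2*s))) := by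
          apply setLIntegral_mono (by fun_prop)
          intro x hx
          have hsubset : Icᶜ ⊆ (fun y : ℝ => x - y) ⁻¹' {t : ℝ | min (a - x) (x + a) ≤ |t|} := by
            intro y hy
            have hyI : ¬(-a ≤ y ∧ y ≤ a) := by simpa [hIcdef, mem_Icc] using hy
            simp only [mem_preimage, mem_setOf_eq]
            rcases not_and_or.mp hyI with h | h
            · push_neg at h
              refine le_abs.mpr (Or.inl ?_)
              have := min_le_right (a - x) (x + a); linarith
            · push_neg at h
              refine le_abs.mpr (Or.inr ?_)
              have := min_le_left (a - x) (x + a); linarith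
          calc ∫⁻ y in Icᶜ, kk (x - y)
              ≤ ∫⁻ y in ((fun y : ℝ => x - y) ⁻¹' {t : ℝ | min (a - x) (x + a) ≤ |t|}), kk (x - y) :=
                lintegral_mono_set hsubset
            _ = ∫⁻ t in {t : ℝ | min (a - x) (x + a) ≤ |t|}, kk t := aux_subleft kk x _
            _ ≤ _ := hinner1 x hx
      _ = ENNReal.ofReal cM * ∫⁻ x in Ms, ENNReal.ofReal ((min (a - x) (x + a)) ^ (-(2*s))) := by
          rw [← lintegral_const_mul _ (by fun_prop)]
          apply lintegral_congr; intro x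
          rw [← ENNReal.ofReal_mul hcM]
      _ ≤ ENNReal.ofReal cM * (2 * ∫⁻ u in Ioc 1 (2*a), ENNReal.ofReal (u ^ (-(2*s)))) := by
          apply mul_le_mul_right
          rw [hMsdef]
          exact aux_M s a hs1 ha
      _ ≤ ENNReal.ofReal cM * (2 * ENNReal.ofReal (κ * Ψ)) := by
          exact mul_le_mul_right (mul_le_mul_right hWbound _) _
      _ = ENNReal.ofReal (cM * (2 * (κ * Ψ))) := by
          rw [show ((2:ℝ≥0∞)) = ENNReal.ofReal 2 by norm_num,
            ← ENNReal.ofReal_mul (by norm_num), ← ENNReal.ofReal_mul hcM]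
  have hM2 : ∫⁻ p in Icᶜ ×ˢ Ms, kk (p.1 - p.2) ≤ ENNReal.ofReal (cM * (2 * (κ * Ψ))) := by
    rw [Measure.volume_eq_prod, ← Measure.prod_restrict, lintegral_prod_symm _ hmeas2.aemeasurable]
    calc ∫⁻ y in Ms, ∫⁻ x in Icᶜ, kk (x - y)
        ≤ ∫⁻ y in Ms, ENNReal.ofReal (cM * (min (a - y) (y + a)) ^ (-(2*s))) := by
          apply setLIntegral_mono (by fun_prop)
          intro y hy
          have hsubset : Icᶜ ⊆ (fun x : ℝ => x - y) ⁻¹' {t : ℝ | min (a - y) (y + a) ≤ |t|} := by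
            intro x hx
            have hxI : ¬(-a ≤ x ∧ x ≤ a) := by simpa [hIcdef, mem_Icc] using hx
            simp only [mem_preimage, mem_setOf_eq]
            rcases not_and_or.mp hxI with h | h
            · push_neg at h
              refine le_abs.mpr (Or.inr ?_)
              have := min_le_right (a - y) (y + a); linarith
            · push_neg at h
              refine le_abs.mpr (Or.inl ?_)
              have := min_le_left (a - y) (y + a); linarith
          calc ∫⁻ x in Icᶜ, kk (x - y)
              ≤ ∫⁻ x in ((fun x : ℝ => x - y) ⁻¹' {t : ℝ | min (a - y) (y + a) ≤ |t|}), kk (x - y) :=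
                lintegral_mono_set hsubset
            _ = ∫⁻ t in {t : ℝ | min (a - y) (y + a) ≤ |t|}, kk t := aux_subright kk y _
            _ ≤ _ := hinner1 y hy
      _ = ENNReal.ofReal cM * ∫⁻ y in Ms, ENNReal.ofReal ((min (a - y) (y + a)) ^ (-(2*s))) := by
          rw [← lintegral_const_mul _ (by fun_prop)]
          apply lintegral_congr; intro y
          rw [← ENNReal.ofReal_mul hcM]
      _ ≤ ENNReal.ofReal cM * (2 * ∫⁻ u in Ioc 1 (2*a), ENNReal.ofReal (u ^ (-(2*s)))) := by
          apply mul_le_mul_right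
          rw [hMsdef]
          exact aux_M s a hs1 ha
      _ ≤ ENNReal.ofReal cM * (2 * ENNReal.ofReal (κ * Ψ)) := by
          exact mul_le_mul_right (mul_le_mul_right hWbound _) _
      _ = ENNReal.ofReal (cM * (2 * (κ * Ψ))) := by
          rw [show ((2:ℝ≥0∞)) = ENNReal.ofReal 2 by norm_num,
            ← ENNReal.ofReal_mul (by norm_num), ← ENNReal.ofReal_mul hcM]
  -- assemble the lintegral bound
  have hMM : MeasurableSet (((Ms ×ˢ Ms)ᶜ : Set (ℝ × ℝ))) :=
    (measurableSet_Icc.prod measurableSet_Icc).compl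
  have hκΨ : 0 ≤ κ * Ψ := mul_nonneg hκ hΨ0
  have chain : ∫⁻ p in S, ENNReal.ofReal (|ψ p.1 - ψ p.2| ^ 2 * K (p.1 - p.2))
      ≤ ENNReal.ofReal (8 * cJ + 4 * cM * (κ * Ψ)) := by
    calc ∫⁻ p in S, ENNReal.ofReal (|ψ p.1 - ψ p.2| ^ 2 * K (p.1 - p.2))
        ≤ ∫⁻ p in S, ((Ms ×ˢ Ms)ᶜ).indicator (fun q : ℝ × ℝ => kk (q.1 - q.2)) p :=
          lintegral_mono hdom
      _ = ∫⁻ p in (Ms ×ˢ Ms)ᶜ ∩ S, kk (p.1 - p.2) := by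
          rw [lintegral_indicator hMM, Measure.restrict_restrict hMM]
      _ ≤ ∫⁻ p in (Es ×ˢ (univ : Set ℝ)) ∪ (((univ : Set ℝ) ×ˢ Es) ∪ ((Ms ×ˢ Icᶜ) ∪ (Icᶜ ×ˢ Ms))),
            kk (p.1 - p.2) := by
          apply lintegral_mono_set
          rintro ⟨x, y⟩ ⟨hnm, hS⟩
          by_cases hxE : x ∈ Es
          · exact Or.inl ⟨hxE, trivial⟩
          by_cases hyE : y ∈ Es
          · exact Or.inr (Or.inl ⟨trivial, hyE⟩)
          rcases hS with hxI | hyI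
          · have hxM : x ∈ Ms := by
              by_contra hxM; exact hxE ⟨hxI, hxM⟩
            have hyM : y ∉ Ms := fun hyM => hnm ⟨hxM, hyM⟩
            have hyI : y ∉ Ic := fun hyI2 => hyE ⟨hyI2, hyM⟩
            exact Or.inr (Or.inr (Or.inl ⟨hxM, hyI⟩))
          · have hyM : y ∈ Ms := by
              by_contra hyM; exact hyE ⟨hyI, hyM⟩
            have hxM : x ∉ Ms := fun hxM => hnm ⟨hxM, hyM⟩
            have hxI : x ∉ Ic := fun hxI2 => hxE ⟨hxI2, hxM⟩
            exact Or.inr (Or.inr (Or.inr ⟨hxI, hyM⟩))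
      _ ≤ (∫⁻ p in Es ×ˢ (univ : Set ℝ), kk (p.1 - p.2))
          + ((∫⁻ p in (univ : Set ℝ) ×ˢ Es, kk (p.1 - p.2))
            + ((∫⁻ p in Ms ×ˢ Icᶜ, kk (p.1 - p.2)) + (∫⁻ p in Icᶜ ×ˢ Ms, kk (p.1 - p.2)))) := by
          refine le_trans (lintegral_union_le _ _ _) (add_le_add_right ?_ _)
          refine le_trans (lintegral_union_le _ _ _) (add_le_add_right ?_ _)
          exact lintegral_union_le _ _ _
      _ ≤ ENNReal.ofReal (cJ * 4) + (ENNReal.ofReal (cJ * 4)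
          + (ENNReal.ofReal (cM * (2 * (κ * Ψ))) + ENNReal.ofReal (cM * (2 * (κ * Ψ))))) :=
          add_le_add hE1 (add_le_add hE2 (add_le_add hM1 hM2))
      _ = ENNReal.ofReal (8 * cJ + 4 * cM * (κ * Ψ)) := by
          rw [← ENNReal.ofReal_add (mul_nonneg hcM (by linarith [hκΨ])) (mul_nonneg hcM (by linarith [hκΨ])),
            ← ENNReal.ofReal_add (mul_nonneg hcJ (by norm_num)) (by nlinarith [hκΨ, hcM]),
            ← ENNReal.ofReal_add (mul_nonneg hcJ (by norm_num)) (by nlinarith [hκΨ, hcM, hcJ])]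
          congr 1; ring
  have hR : 0 ≤ 8 * cJ + 4 * cM * (κ * Ψ) := by nlinarith [hκΨ, hcM, hcJ]
  have step1 : (∫ p in S, |ψ p.1 - ψ p.2| ^ 2 * K (p.1 - p.2)) ≤ 8 * cJ + 4 * cM * (κ * Ψ) := by
    calc ∫ p in S, |ψ p.1 - ψ p.2| ^ 2 * K (p.1 - p.2)
        ≤ ‖∫ p in S, |ψ p.1 - ψ p.2| ^ 2 * K (p.1 - p.2)‖ := by
          rw [Real.norm_eq_abs]; exact le_abs_self _
      _ ≤ (∫⁻ p in S, ENNReal.ofReal ‖|ψ p.1 - ψ p.2| ^ 2 * K (p.1 - p.2)‖).toReal :=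
          norm_integral_le_lintegral_norm _
      _ = (∫⁻ p in S, ENNReal.ofReal (|ψ p.1 - ψ p.2| ^ 2 * K (p.1 - p.2))).toReal := by
          congr 1
          apply lintegral_congr
          intro p
          rw [Real.norm_eq_abs, abs_of_nonneg (mul_nonneg (by positivity) (hK0 _))]
      _ ≤ 8 * cJ + 4 * cM * (κ * Ψ) := ENNReal.toReal_le_of_le_ofReal hR chain
  calc (1/4) * (∫ p in S, |ψ p.1 - ψ p.2| ^ 2 * K (p.1 - p.2))
      ≤ (1/4) * (8 * cJ + 4 * cM * (κ * Ψ)) := by linarith [step1]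
    _ ≤ 8 * cJ + 4 * cM * (κ * Ψ) := by linarith [hR]
    _ ≤ (8 * cJ + 4 * cM * κ + 1) * Ψ := by nlinarith [hcJ, hcM, hκ, hΨ1, hΨ0, hκΨ]
end
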